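/- arXiv:2007.15899 — 3 statements merged into one kernel-verified Lean document; each statement's English description precedes it below -/
import Mathlib

section
/- Under the stated continuity and boundedness assumptions, a market equilibrium exists: there is a triple (λ, N, K) ∈ [0, Λ] × [N₁, N₂] × [0, K̄] satisfying simultaneously λ = F_p(α·t_w(N − λ/μ) + p_f), N = F_d(w_g + (l − p_g)·K·r(λ, N, K)/N), and K = F_g(p_g·r(λ, N, K)). -/
/-!
Writing `s = N - λ / μ` for the number of idle drivers, the demand equation reads
`λ = F_p (α t_w(s) + p_f)`, a function of `s` alone. Substituting `N = s + λ / μ`, an equilibrium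
is a fixed point of a continuous self-map of the rectangle `[N₁ - Λ / μ, N₂] × [0, K̄]` in the
variables `(s, K)`, so it exists by Brouwer's theorem in dimension two.

Brouwer's theorem is proved on the standard 2-simplex through Sperner's lemma: label each point by
a positive barycentric coordinate that the map does not increase. Every triangulation then has a
fully labelled small triangle, and by compactness the three closed sets where a given coordinate
does not increase have a common point, which is fixed since both points have coordinate sum `1`.
The rectangle is a retract of an affine copy of the simplex.
-/

open Finset Set Function Metric

def door (a b : Fin 3) : ZMod 2 := if (a = 0 ∧ b = 1) ∨ (a = 1 ∧ b = 0) then 1 else 0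

def IsRainbow (a b c : Fin 3) : Prop := ∀ m, m = a ∨ m = b ∨ m = c

lemma door_add_door_add_door_of_not_isRainbow {a b c : Fin 3} (h : ¬IsRainbow a b c) :
    door a b + door a c + door b c = 0 := by
  revert h; unfold IsRainbow door; revert a b c; decide

lemma door_eq_zero {a b c : Fin 3} (hc : c ≠ 2) (ha : a ≠ c) (hb : b ≠ c) : door a b = 0 := by
  revert hc ha hb; unfold door; revert a b c; decide

lemma door_eq_of_ne_two {a b : Fin 3} (ha : a ≠ 2) (hb : b ≠ 2) :
    door a b = (if a = 1 then 1 else 0) + (if b = 1 then 1 else 0) := by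
  revert ha hb; unfold door; revert a b; decide

lemma sum_range_add_succ_zmod_two (W : ℕ → ZMod 2) (n : ℕ) :
    ∑ i ∈ range n, (W i + W (i + 1)) = W 0 + W n := by
  simpa [CharTwo.sub_eq_add, add_comm] using sum_range_sub W n

/-- `H i j`, `V i j`, `D i j` are values on the horizontal, vertical and diagonal edges leaving
`(i, j)`; the summands are the up-triangle at `(i, j)` and the down-triangle above it. Every
interior edge lies on two triangles, so modulo `2` only the three sides of the big triangle
survive. -/
theorem sum_triangles_eq_sum_boundary (H V D : ℕ → ℕ → ZMod 2) (n : ℕ) :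
    ∑ i ∈ range n, (∑ j ∈ range (n - i), (H i j + V i j + D i j)
        + ∑ j ∈ range (n - (i + 1)), (D i j + H i (j + 1) + V (i + 1) j))
      = ∑ i ∈ range n, H i 0 + ∑ j ∈ range n, V 0 j + ∑ i ∈ range n, D i (n - (i + 1)) := by
  have hcol : ∀ i ∈ range n, ∑ j ∈ range (n - i), (H i j + V i j + D i j)
        + ∑ j ∈ range (n - (i + 1)), (D i j + H i (j + 1) + V (i + 1) j)
      = H i 0 + D i (n - (i + 1)) + (∑ j ∈ range (n - i), V i j
        + ∑ j ∈ range (n - (i + 1)), V (i + 1) j) := by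
    intro i hi
    obtain ⟨m, hm⟩ : ∃ m, n - i = m + 1 := ⟨n - (i + 1), by grind⟩
    rw [hm, show n - (i + 1) = m by omega]
    simp only [sum_add_distrib, sum_range_succ' (H i), sum_range_succ (D i)]
    grind
  rw [sum_congr rfl hcol, sum_add_distrib, sum_add_distrib,
    sum_range_add_succ_zmod_two (fun i => ∑ j ∈ range (n - i), V i j)]
  simp only [Nat.sub_zero, Nat.sub_self, range_zero, sum_empty, add_zero, add_right_comm]

theorem sperner (n : ℕ) (ℓ : ℕ → ℕ → Fin 3) (h0 : ∀ j ≤ n, ℓ 0 j ≠ 0)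
    (h1 : ∀ i ≤ n, ℓ i 0 ≠ 1) (h2 : ∀ i j, i + j = n → ℓ i j ≠ 2) :
    ∃ i j, (i + j < n ∧ IsRainbow (ℓ i j) (ℓ (i + 1) j) (ℓ i (j + 1))) ∨
      (i + j + 1 < n ∧ IsRainbow (ℓ (i + 1) j) (ℓ i (j + 1)) (ℓ (i + 1) (j + 1))) := by
  by_contra! h
  have key := sum_triangles_eq_sum_boundary (fun i j => door (ℓ i j) (ℓ (i + 1) j))
    (fun i j => door (ℓ i j) (ℓ i (j + 1))) (fun i j => door (ℓ (i + 1) j) (ℓ i (j + 1))) n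
  have htriangles : ∀ i ∈ range n, ∑ j ∈ range (n - i), (door (ℓ i j) (ℓ (i + 1) j)
      + door (ℓ i j) (ℓ i (j + 1)) + door (ℓ (i + 1) j) (ℓ i (j + 1)))
      + ∑ j ∈ range (n - (i + 1)), (door (ℓ (i + 1) j) (ℓ i (j + 1))
        + door (ℓ i (j + 1)) (ℓ (i + 1) (j + 1)) + door (ℓ (i + 1) j) (ℓ (i + 1) (j + 1))) = 0 := by
    intro i _
    rw [sum_eq_zero, sum_eq_zero, add_zero] <;> intro j hj <;> rw [Finset.mem_range] at hj
    · rw [add_right_comm]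
      exact door_add_door_add_door_of_not_isRainbow ((h i j).2 (by omega))
    · exact door_add_door_add_door_of_not_isRainbow ((h i j).1 (by omega))
  have hbottom : ∀ i ∈ range n, door (ℓ i 0) (ℓ (i + 1) 0) = 0 := by
    intro i hi
    rw [Finset.mem_range] at hi
    exact door_eq_zero (by decide) (h1 i (by omega)) (h1 (i + 1) (by omega))
  have hleft : ∀ j ∈ range n, door (ℓ 0 j) (ℓ 0 (j + 1)) = 0 := by
    intro j hj
    rw [Finset.mem_range] at hj
    exact door_eq_zero (by decide) (h0 j (by omega)) (h0 (j + 1) (by omega))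
  set g : ℕ → ZMod 2 := fun k => if ℓ k (n - k) = 1 then 1 else 0
  have hhyp : ∀ i ∈ range n,
      door (ℓ (i + 1) (n - (i + 1))) (ℓ i (n - (i + 1) + 1)) = g i + g (i + 1) := by
    intro i hi
    rw [Finset.mem_range] at hi
    rw [show n - (i + 1) + 1 = n - i by omega,
      door_eq_of_ne_two (h2 _ _ (by omega)) (h2 _ _ (by omega)), add_comm]
  have hg0 : g 0 = 1 := by
    have : ℓ 0 n = 1 := by have := h0 n le_rfl; have := h2 0 n (zero_add n); omega
    simp [g, this]
  have hgn : g n = 0 := by simp [g, h1 n le_rfl]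
  rw [sum_eq_zero htriangles, sum_eq_zero hbottom, sum_eq_zero hleft, sum_congr rfl hhyp,
    sum_range_add_succ_zmod_two, hg0, hgn] at key
  simp at key

theorem exists_cell_forall_label (n : ℕ) (ℓ : ℕ → ℕ → Fin 3) (h0 : ∀ j ≤ n, ℓ 0 j ≠ 0)
    (h1 : ∀ i ≤ n, ℓ i 0 ≠ 1) (h2 : ∀ i j, i + j = n → ℓ i j ≠ 2) :
    ∃ i j, ∀ m, ∃ a ≤ 1, ∃ b ≤ 1, i + a + (j + b) ≤ n ∧ ℓ (i + a) (j + b) = m := by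
  obtain ⟨i, j, ⟨hij, hrainbow⟩ | ⟨hij, hrainbow⟩⟩ := sperner n ℓ h0 h1 h2 <;>
    refine ⟨i, j, fun m => ?_⟩ <;> rcases hrainbow m with rfl | rfl | rfl
  exacts [⟨0, zero_le_one, 0, zero_le_one, by omega, rfl⟩,
    ⟨1, le_rfl, 0, zero_le_one, by omega, rfl⟩, ⟨0, zero_le_one, 1, le_rfl, by omega, rfl⟩,
    ⟨1, le_rfl, 0, zero_le_one, by omega, rfl⟩, ⟨0, zero_le_one, 1, le_rfl, by omega, rfl⟩,
    ⟨1, le_rfl, 1, le_rfl, by omega, rfl⟩]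

noncomputable def gridPoint (n i j : ℕ) : Fin 3 → ℝ := ![i / n, j / n, (n - i - j) / n]

lemma gridPoint_mem_stdSimplex {n i j : ℕ} (hn : 0 < n) (hij : i + j ≤ n) :
    gridPoint n i j ∈ stdSimplex ℝ (Fin 3) := by
  have hn' : (0 : ℝ) < n := by exact_mod_cast hn
  have hij' : (i : ℝ) + j ≤ n := by exact_mod_cast hij
  refine ⟨fun m => ?_, ?_⟩
  · fin_cases m <;> simp only [gridPoint, Fin.zero_eta, Fin.mk_one, Fin.reduceFinMk, Fin.isValue,
      Matrix.cons_val_zero, Matrix.cons_val_one, Matrix.cons_val] <;>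
      apply div_nonneg <;> linarith
  · simp only [gridPoint, Fin.sum_univ_three, Fin.isValue, Matrix.cons_val_zero,
      Matrix.cons_val_one, Matrix.cons_val]
    field_simp
    ring

lemma dist_gridPoint_le (n i j : ℕ) {a b : ℕ} (ha : a ≤ 1) (hb : b ≤ 1) :
    dist (gridPoint n i j) (gridPoint n (i + a) (j + b)) ≤ 2 / n := by
  have ha' : (a : ℝ) ≤ 1 := by exact_mod_cast ha
  have hb' : (b : ℝ) ≤ 1 := by exact_mod_cast hb
  have : (0 : ℝ) ≤ a := a.cast_nonneg
  have : (0 : ℝ) ≤ b := b.cast_nonneg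
  rw [dist_pi_le_iff (by positivity)]
  intro m
  fin_cases m <;> simp only [gridPoint, Fin.zero_eta, Fin.mk_one, Fin.reduceFinMk, Fin.isValue,
      Matrix.cons_val_zero, Matrix.cons_val_one, Matrix.cons_val, Nat.cast_add, Real.dist_eq,
      ← sub_div, sub_add_cancel_left, abs_le, ← neg_div] <;>
    exact ⟨div_le_div_of_nonneg_right (by linarith) n.cast_nonneg,
      div_le_div_of_nonneg_right (by linarith) n.cast_nonneg⟩

theorem stdSimplex_exists_near_every_label (lab : (Fin 3 → ℝ) → Fin 3)
    (hlab : ∀ x ∈ stdSimplex ℝ (Fin 3), 0 < x (lab x)) {ε : ℝ} (hε : 0 < ε) :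
    ∃ x ∈ stdSimplex ℝ (Fin 3), ∀ m, ∃ y ∈ stdSimplex ℝ (Fin 3), lab y = m ∧ dist x y < ε := by
  obtain ⟨n, hn⟩ := exists_nat_gt (2 / ε)
  have hn₀ : 0 < n := by exact_mod_cast (div_pos two_pos hε).trans hn
  have hlab_ne {i j : ℕ} (hij : i + j ≤ n) (m : Fin 3) (hm : gridPoint n i j m = 0) :
      lab (gridPoint n i j) ≠ m := fun h =>
    (hlab _ (gridPoint_mem_stdSimplex hn₀ hij)).ne' (h ▸ hm)
  obtain ⟨i, j, hcell⟩ := exists_cell_forall_label n (fun i j => lab (gridPoint n i j))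
    (fun j hj => hlab_ne (by omega) 0 (by simp [gridPoint]))
    (fun i hi => hlab_ne (by omega) 1 (by simp [gridPoint]))
    (fun i j hij => hlab_ne hij.le 2 (by simp [gridPoint, ← hij]))
  refine ⟨gridPoint n i j, gridPoint_mem_stdSimplex hn₀
    (by obtain ⟨_, _, _, _, h, -⟩ := hcell 0; omega), fun m => ?_⟩
  obtain ⟨a, ha, b, hb, hab, rfl⟩ := hcell m
  refine ⟨_, gridPoint_mem_stdSimplex hn₀ hab, rfl, (dist_gridPoint_le n i j ha hb).trans_lt ?_⟩
  rwa [div_lt_comm₀ (by positivity) hε]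

theorem IsCompact.exists_forall_mem_of_forall_exists_dist_lt {X ι : Type*} [MetricSpace X]
    [Fintype ι] {K : Set X} (hK : IsCompact K) {C : ι → Set X} (hC : ∀ i, IsClosed (C i))
    (h : ∀ ε > 0, ∃ x ∈ K, ∀ i, ∃ y ∈ C i, dist x y < ε) : ∃ x ∈ K, ∀ i, x ∈ C i := by
  obtain ⟨x₀, hx₀, hx₀C⟩ := h 1 one_pos
  have hg : Continuous fun x => ∑ i, infDist x (C i) := by fun_prop
  obtain ⟨p, hpK, hmin⟩ := hK.exists_isMinOn ⟨x₀, hx₀⟩ hg.continuousOn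
  have hsmall : ∀ δ > 0, ∑ i, infDist p (C i) < δ := by
    intro δ hδ
    obtain ⟨x, hxK, hxC⟩ := h (δ / (Fintype.card ι + 1)) (by positivity)
    calc ∑ i, infDist p (C i) ≤ ∑ i, infDist x (C i) := hmin hxK
      _ ≤ ∑ _i : ι, δ / (Fintype.card ι + 1) := by
        gcongr with i
        obtain ⟨y, hy, hxy⟩ := hxC i
        exact (infDist_le_dist_of_mem hy).trans hxy.le
      _ < δ := by
        rw [sum_const, card_univ, nsmul_eq_mul, mul_div_assoc']
        rw [div_lt_iff₀ (by positivity)]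
        nlinarith
  have hzero : ∑ i, infDist p (C i) = 0 :=
    le_antisymm (le_of_forall_pos_lt_add fun δ hδ => by simpa using hsmall δ hδ)
      (sum_nonneg fun i _ => infDist_nonneg)
  rw [sum_eq_zero_iff_of_nonneg fun i _ => infDist_nonneg] at hzero
  refine ⟨p, hpK, fun i => ?_⟩
  obtain ⟨y, hy, -⟩ := hx₀C i
  exact ((hC i).mem_iff_infDist_zero ⟨y, hy⟩).2 (hzero i (mem_univ i))

theorem exists_pos_le_of_sum_eq {ι : Type*} [Fintype ι] {x y : ι → ℝ} (hy : ∀ i, 0 ≤ y i)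
    (hx : 0 < ∑ i, x i) (hxy : ∑ i, y i = ∑ i, x i) : ∃ i, 0 < x i ∧ y i ≤ x i := by
  by_contra! h
  obtain ⟨k, -, hk⟩ :=
    exists_lt_of_sum_lt (s := univ) (f := fun _ => (0 : ℝ)) (g := x) (by simpa using hx)
  have : ∑ i, x i < ∑ i, y i := sum_lt_sum
    (fun i _ => (le_or_gt (x i) 0).elim (fun h0 => h0.trans (hy i)) fun hpos => (h i hpos).le)
    ⟨k, mem_univ k, h k hk⟩
  linarith

def HasFixedPointProperty {X : Type*} [TopologicalSpace X] (s : Set X) : Prop :=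
  ∀ f : X → X, ContinuousOn f s → MapsTo f s s → ∃ x ∈ s, IsFixedPt f x

theorem HasFixedPointProperty.of_retract {X Y : Type*} [TopologicalSpace X] [TopologicalSpace Y]
    {s : Set X} {t : Set Y} (hs : HasFixedPointProperty s) {i : Y → X} {ρ : X → Y}
    (hi : ContinuousOn i t) (hρ : ContinuousOn ρ s) (hit : MapsTo i t s) (hρs : MapsTo ρ s t)
    (hρi : ∀ y ∈ t, ρ (i y) = y) : HasFixedPointProperty t := by
  intro f hf hft
  obtain ⟨x, hx, hfix⟩ := hs (i ∘ f ∘ ρ) (hi.comp (hf.comp hρ hρs) (hft.comp hρs))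
    (hit.comp (hft.comp hρs))
  refine ⟨ρ x, hρs hx, ?_⟩
  calc f (ρ x) = ρ (i (f (ρ x))) := (hρi _ (hft (hρs hx))).symm
    _ = ρ x := congrArg ρ hfix

theorem hasFixedPointProperty_stdSimplex : HasFixedPointProperty (stdSimplex ℝ (Fin 3)) := by
  intro f hf hfS
  have hlabel (x) (hx : x ∈ stdSimplex ℝ (Fin 3)) : ∃ m, 0 < x m ∧ f x m ≤ x m :=
    exists_pos_le_of_sum_eq (hfS hx).1 (by rw [hx.2]; exact one_pos) ((hfS hx).2.trans hx.2.symm)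
  choose! lab hlab_pos hlab_le using hlabel
  obtain ⟨p, hp, hpC⟩ :=
    (isCompact_stdSimplex ℝ (Fin 3)).exists_forall_mem_of_forall_exists_dist_lt
    (C := fun m => {x ∈ stdSimplex ℝ (Fin 3) | f x m ≤ x m})
    (fun m => (isClosed_stdSimplex ℝ (Fin 3)).isClosed_le
      ((continuous_apply m).comp_continuousOn hf) (continuous_apply m).continuousOn)
    fun ε hε => by
      obtain ⟨x, hx, hnear⟩ := stdSimplex_exists_near_every_label lab hlab_pos hε
      refine ⟨x, hx, fun m => ?_⟩
      obtain ⟨y, hy, rfl, hxy⟩ := hnear m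
      exact ⟨y, ⟨hy, hlab_le y hy⟩, hxy⟩
  refine ⟨p, hp, funext fun m => ?_⟩
  exact (sum_eq_sum_iff_of_le fun m _ => (hpC m).2).1 ((hfS hp).2.trans hp.2.symm) m (mem_univ m)

theorem hasFixedPointProperty_Icc_prod_Icc {a b c d : ℝ} (hab : a ≤ b) (hcd : c ≤ d) :
    HasFixedPointProperty (Icc a b ×ˢ Icc c d) := by
  set L := b - a + (d - c) + 1
  have hL : 0 < L := by positivity
  refine hasFixedPointProperty_stdSimplex.of_retract
    (i := fun v => ![(v.1 - a) / L, (v.2 - c) / L, 1 - (v.1 - a) / L - (v.2 - c) / L])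
    (ρ := fun x => (projIcc a b hab (a + L * x 0), projIcc c d hcd (c + L * x 1)))
    (by fun_prop) (by fun_prop) ?_ ?_ ?_
  · rintro ⟨x, y⟩ ⟨⟨hax, hxb⟩, ⟨hcy, hyd⟩⟩
    refine ⟨fun m => ?_, by simp [Fin.sum_univ_three]⟩
    have h : (x - a) / L + (y - c) / L ≤ 1 := by
      rw [← add_div, div_le_one hL]; linarith
    fin_cases m <;> simp only [Fin.zero_eta, Fin.mk_one, Fin.reduceFinMk, Fin.isValue,
      Matrix.cons_val_zero, Matrix.cons_val_one, Matrix.cons_val, sub_nonneg, ge_iff_le] <;>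
      first | positivity | linarith
  · exact fun x _ => ⟨(projIcc a b hab _).2, (projIcc c d hcd _).2⟩
  · rintro ⟨x, y⟩ ⟨hx, hy⟩
    simp [mul_div_cancel₀ _ hL.ne', projIcc_of_mem _ hx, projIcc_of_mem _ hy]

theorem market_equilibrium_exists_general
    (pf wg pg l α μ Λ N₁ N₂ Kbar : ℝ)
    (hμ : 0 < μ)
    (hN₁₂ : N₁ ≤ N₂) (hNΛ : Λ / μ < N₁) (hKbar : 0 ≤ Kbar)
    (Fp Fd Fg : ℝ → ℝ) (tw : ℝ → ℝ) (r : ℝ → ℝ → ℝ → ℝ)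
    (hFp : Continuous Fp) (hFpRange : ∀ x, Fp x ∈ Set.Icc 0 Λ)
    (hFd : Continuous Fd) (hFdRange : ∀ x, Fd x ∈ Set.Icc N₁ N₂)
    (hFg : Continuous Fg) (hFgRange : ∀ x, Fg x ∈ Set.Icc 0 Kbar)
    (htw : ContinuousOn tw (Set.Ioi 0))
    (hr : Continuous fun p : ℝ × ℝ × ℝ => r p.1 p.2.1 p.2.2) :
    ∃ lam N K : ℝ,
      lam ∈ Set.Icc 0 Λ ∧ N ∈ Set.Icc N₁ N₂ ∧ K ∈ Set.Icc 0 Kbar ∧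
      lam = Fp (α * tw (N - lam / μ) + pf) ∧
      N = Fd (wg + (l - pg) * K * r lam N K / N) ∧
      K = Fg (pg * r lam N K) := by
  set A : ℝ → ℝ := fun s => Fp (α * tw s + pf)
  set N : ℝ → ℝ := fun s => s + A s / μ
  set ρ : ℝ × ℝ → ℝ := fun q => r (A q.1) (N q.1) q.2
  set Φ : ℝ × ℝ → ℝ × ℝ := fun q =>
    (Fd (wg + (l - pg) * q.2 * ρ q / N q.1) - A q.1 / μ, Fg (pg * ρ q))
  set R := Icc (N₁ - Λ / μ) N₂ ×ˢ Icc 0 Kbar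
  have hA (s : ℝ) : 0 ≤ A s / μ ∧ A s / μ ≤ Λ / μ :=
    ⟨div_nonneg (hFpRange _).1 hμ.le, div_le_div_of_nonneg_right (hFpRange _).2 hμ.le⟩
  have hN_ne : ∀ q ∈ R, N q.1 ≠ 0 := fun q hq => by linarith [hq.1.1, (hA q.1).1]
  have hA_cont : ContinuousOn (fun q : ℝ × ℝ => A q.1) R :=
    hFp.comp_continuousOn ((continuousOn_const.mul (htw.comp continuousOn_fst
      fun q hq => (sub_pos.2 hNΛ).trans_le hq.1.1)).add continuousOn_const)
  have hN_cont : ContinuousOn (fun q : ℝ × ℝ => N q.1) R :=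
    continuousOn_fst.add (hA_cont.div_const μ)
  have hρ_cont : ContinuousOn ρ R :=
    hr.comp_continuousOn (hA_cont.prodMk (hN_cont.prodMk continuousOn_snd))
  have hΦ_cont : ContinuousOn Φ R :=
    ((hFd.comp_continuousOn (continuousOn_const.add
      (((continuousOn_const.mul continuousOn_snd).mul hρ_cont).div hN_cont hN_ne))).sub
        (hA_cont.div_const μ)).prodMk (hFg.comp_continuousOn (continuousOn_const.mul hρ_cont))
  have hΦ_maps : MapsTo Φ R R := fun q _ =>
    ⟨⟨by linarith [(hFdRange (wg + (l - pg) * q.2 * ρ q / N q.1)).1, (hA q.1).2],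
      by linarith [(hFdRange (wg + (l - pg) * q.2 * ρ q / N q.1)).2, (hA q.1).1]⟩, hFgRange _⟩
  obtain ⟨⟨s, K⟩, ⟨-, hK⟩, hfix⟩ := hasFixedPointProperty_Icc_prod_Icc
    (by linarith [hA 0]) hKbar Φ hΦ_cont hΦ_maps
  have hNs : Fd (wg + (l - pg) * K * ρ (s, K) / N s) = N s := by
    have := congrArg Prod.fst hfix
    simp only [Φ] at this
    linarith
  exact ⟨A s, N s, K, hFpRange _, hNs ▸ hFdRange _, hK, congrArg A (add_sub_cancel_right s _).symm,
    hNs.symm, (congrArg Prod.snd hfix).symm⟩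

/-- Existence of a market equilibrium: under continuity and boundedness assumptions on the
passenger demand `Fp`, driver supply `Fd`, parking supply `Fg`, waiting time `tw` and garage
utilization `r`, there is a triple `(lam, N, K) ∈ [0, Λ] × [N₁, N₂] × [0, K̄]` satisfying the
three equilibrium equations simultaneously. -/
theorem market_equilibrium_exists
    (pf wg pg l α μ Λ N₁ N₂ Kbar : ℝ)
    (hα : 0 < α) (hμ : 0 < μ) (hΛ : 0 < Λ)
    (hN₁ : 0 < N₁) (hN₁₂ : N₁ ≤ N₂) (hNΛ : Λ / μ < N₁) (hKbar : 0 ≤ Kbar)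
    (Fp Fd Fg : ℝ → ℝ) (tw : ℝ → ℝ) (r : ℝ → ℝ → ℝ → ℝ)
    (hFp : Continuous Fp) (hFpRange : ∀ x, Fp x ∈ Set.Icc 0 Λ)
    (hFd : Continuous Fd) (hFdRange : ∀ x, Fd x ∈ Set.Icc N₁ N₂)
    (hFg : Continuous Fg) (hFgRange : ∀ x, Fg x ∈ Set.Icc 0 Kbar)
    (htw : ContinuousOn tw (Set.Ioi 0))
    (hr : Continuous fun p : ℝ × ℝ × ℝ => r p.1 p.2.1 p.2.2) :
    ∃ lam N K : ℝ,
      lam ∈ Set.Icc 0 Λ ∧ N ∈ Set.Icc N₁ N₂ ∧ K ∈ Set.Icc 0 Kbar ∧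
      lam = Fp (α * tw (N - lam / μ) + pf) ∧
      N = Fd (wg + (l - pg) * K * r lam N K / N) ∧
      K = Fg (pg * r lam N K) :=
  market_equilibrium_exists_general pf wg pg l α μ Λ N₁ N₂ Kbar hμ hN₁₂ hNΛ hKbar Fp Fd Fg tw r hFp
    hFpRange hFd hFdRange hFg hFgRange htw hr
end

section
/- Offering parking services weakly increases the platform's optimal profit: sup over the parking-feasible set of λ·p_f − w_g·N is at least sup over the no-parking-feasible set of λ·p_f − w_g·N. (In particular, any profit achievable without parking is achievable with parking by setting the parking rate p_g equal to the cruising cost l.) -/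
lemma exists_fixed_point (Kbar : ℝ) (hKbar : 0 ≤ Kbar) (g : ℝ → ℝ)
    (hg : ContinuousOn g (Set.Icc 0 Kbar))
    (hrange : ∀ x ∈ Set.Icc (0:ℝ) Kbar, g x ∈ Set.Icc 0 Kbar) :
    ∃ K, K = g K := by
  have hf : ContinuousOn (fun K => g K - K) (Set.Icc 0 Kbar) :=
    hg.sub continuousOn_id
  have h0 : (0:ℝ) ∈ Set.Icc 0 Kbar := ⟨le_refl 0, hKbar⟩
  have hK : Kbar ∈ Set.Icc (0:ℝ) Kbar := ⟨hKbar, le_refl _⟩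
  have h1 : g Kbar - Kbar ≤ 0 := sub_nonpos.mpr (hrange Kbar hK).2
  have h2 : 0 ≤ g 0 - 0 := by simpa using (hrange 0 h0).1
  have := intermediate_value_Icc' hKbar hf
  have hmem : (0:ℝ) ∈ (fun K => g K - K) '' Set.Icc 0 Kbar :=
    this ⟨h1, h2⟩
  obtain ⟨K, _, hKeq⟩ := hmem
  exact ⟨K, by simp only [sub_eq_zero] at hKeq; linarith [hKeq]⟩

/-- Offering parking services weakly increases the platform's optimal profit:
the supremum of the profit `λ·p_f − w_g·N` over the parking-feasible set is at least the
supremum of the profit over the no-parking-feasible set.  (Suprema are taken in `EReal`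
so that they are always well defined.) -/
theorem parking_weakly_increases_profit
    (α μ l Kbar : ℝ) (hα : 0 < α) (hμ : 0 < μ) (hKbar : 0 ≤ Kbar)
    (Fp Fd tw Fg : ℝ → ℝ) (r : ℝ → ℝ → ℝ → ℝ)
    (hFdpos : ∀ x, 0 < Fd x)
    (hFg : Continuous Fg) (hFgRange : ∀ x, Fg x ∈ Set.Icc 0 Kbar)
    (hr : ∀ lam N : ℝ, ContinuousOn (fun K => r lam N K) (Set.Icc 0 Kbar)) :
    sSup {x : EReal | ∃ pf wg lam N : ℝ,
        lam = Fp (α * tw (N - lam / μ) + pf) ∧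
        N = Fd wg ∧
        x = ((lam * pf - wg * N : ℝ) : EReal)} ≤
    sSup {x : EReal | ∃ pf wg pg lam N K : ℝ,
        lam = Fp (α * tw (N - lam / μ) + pf) ∧
        N = Fd (wg + (l - pg) * K * r lam N K / N) ∧
        K = Fg (pg * r lam N K) ∧
        x = ((lam * pf - wg * N : ℝ) : EReal)} := by
  apply sSup_le_sSup
  rintro x ⟨pf, wg, lam, N, h1, h2, h3⟩
  have hcont : ContinuousOn (fun K => Fg (l * r lam N K)) (Set.Icc 0 Kbar) :=
    hFg.comp_continuousOn (continuousOn_const.mul (hr lam N))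
  obtain ⟨K, hK⟩ := exists_fixed_point Kbar hKbar (fun K => Fg (l * r lam N K))
    hcont (fun x _ => hFgRange _)
  refine ⟨pf, wg, l, lam, N, K, h1, ?_, hK, h3⟩
  rw [h2]
  ring_nf
end

section
/- If ρ < 1, then Σ_{n=0}^∞ min(n, N)·π(n) converges and equals (λ/μ)·Σ_{n=0}^∞ π(n). Equivalently, under the normalized stationary distribution the expected number of busy servers is λ/μ, and the expected number of idle servers is N − λ/μ. -/
/-!
The stationary weights satisfy the local balance equations
`min(n + 1, N) · π(n + 1) = N ρ · π(n)` (flow `n + 1 → n` equals flow `n → n + 1`), so the sequence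
`min(n, N) · π(n)` is `π` itself scaled by `N ρ = λ / μ` and shifted by one place. Summability of
`π` comes from its geometric tail `π(n) ∝ ρⁿ` for `n > N`.
-/

theorem HasSum.of_succ_eq_mul_left {R : Type*} [Ring R] [TopologicalSpace R] [IsTopologicalRing R]
    {f g : ℕ → R} {r s : R} (hf : HasSum f s) (h₀ : g 0 = 0) (hsucc : ∀ n, g (n + 1) = r * f n) :
    HasSum g (r * s) := by
  rw [← hasSum_nat_add_iff' 1]
  simpa [h₀, hsucc] using hf.mul_left r

noncomputable def mmNWeight (N : ℕ) (ρ : ℝ) (n : ℕ) : ℝ :=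
  if n ≤ N then ((N : ℝ) * ρ) ^ n / n.factorial else (N : ℝ) ^ N * ρ ^ n / N.factorial

namespace mmNWeight

variable {N : ℕ} {ρ : ℝ}

theorem of_le {n : ℕ} (h : n ≤ N) : mmNWeight N ρ n = ((N : ℝ) * ρ) ^ n / n.factorial :=
  if_pos h

theorem of_lt {n : ℕ} (h : N < n) : mmNWeight N ρ n = (N : ℝ) ^ N * ρ ^ n / N.factorial :=
  if_neg h.not_ge

theorem min_succ_mul_succ (n : ℕ) :
    ((min (n + 1) N : ℕ) : ℝ) * mmNWeight N ρ (n + 1) = (N * ρ) * mmNWeight N ρ n := by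
  rcases lt_trichotomy n N with h | rfl | h
  · rw [min_eq_left h, of_le h, of_le h.le, Nat.factorial_succ, pow_succ]
    push_cast
    field_simp
  · rw [min_eq_right (Nat.le_add_right n 1), of_lt (Nat.lt_add_one n), of_le le_rfl]
    field_simp
    ring
  · rw [min_eq_right (h.trans (Nat.lt_add_one n)).le, of_lt h, of_lt (h.trans (Nat.lt_add_one n))]
    ring

theorem summable (hρ₀ : 0 ≤ ρ) (hρ₁ : ρ < 1) : Summable (mmNWeight N ρ) := by
  rw [← summable_nat_add_iff (N + 1)]
  have htail : (fun n => mmNWeight N ρ (n + (N + 1))) =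
      fun n => ((N : ℝ) ^ N / N.factorial * ρ ^ (N + 1)) * ρ ^ n := by
    funext n
    rw [of_lt (by omega), pow_add]
    ring
  rw [htail]
  exact (summable_geometric_of_lt_one hρ₀ hρ₁).mul_left _

end mmNWeight

/-- If `ρ < 1`, then `Σ_{n=0}^∞ min(n, N)·π(n)` converges and equals `(λ/μ)·Σ_n π(n)`:
under the normalized stationary distribution the expected number of busy servers is `λ/μ`,
and the expected number of idle servers is `N − λ/μ`. -/
theorem mmN_expected_busy_servers
    (N : ℕ) (hN : 1 ≤ N) (lam μ ρ : ℝ) (hlam : 0 < lam) (hμ : 0 < μ)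
    (hρ : ρ = lam / (N * μ)) (hρ₁ : ρ < 1)
    (pi : ℕ → ℝ)
    (hpi₁ : ∀ n : ℕ, n ≤ N → pi n = ((N : ℝ) * ρ) ^ n / (n.factorial : ℝ))
    (hpi₂ : ∀ n : ℕ, N < n → pi n = (N : ℝ) ^ N * ρ ^ n / (N.factorial : ℝ)) :
    Summable (fun n : ℕ => ((min n N : ℕ) : ℝ) * pi n) ∧
    (∑' n : ℕ, ((min n N : ℕ) : ℝ) * pi n) = (lam / μ) * ∑' n : ℕ, pi n ∧
    (∑' n : ℕ, ((N : ℝ) - ((min n N : ℕ) : ℝ)) * pi n) =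
      ((N : ℝ) - lam / μ) * ∑' n : ℕ, pi n := by
  obtain rfl : pi = mmNWeight N ρ := by
    funext n
    rcases le_or_gt n N with h | h
    · rw [mmNWeight.of_le h, hpi₁ n h]
    · rw [mmNWeight.of_lt h, hpi₂ n h]
  have hload : (N : ℝ) * ρ = lam / μ := by
    have hN₀ : (N : ℝ) ≠ 0 := Nat.cast_ne_zero.mpr (by omega)
    rw [hρ]
    field_simp
  have hρ₀ : 0 ≤ ρ := by rw [hρ]; positivity
  have hweights := (mmNWeight.summable (N := N) hρ₀ hρ₁).hasSum
  have hbusy : HasSum (fun n => ((min n N : ℕ) : ℝ) * mmNWeight N ρ n)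
      (lam / μ * ∑' n, mmNWeight N ρ n) :=
    hload ▸ hweights.of_succ_eq_mul_left (by simp) mmNWeight.min_succ_mul_succ
  refine ⟨hbusy.summable, hbusy.tsum_eq, ?_⟩
  simp only [sub_mul]
  exact ((hweights.mul_left (N : ℝ)).sub hbusy).tsum_eq
end
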